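/- For every integer m ≥ 2, b(m) ≤ h(m) + (√2+1)·⌊log₃ m⌋. -/

import Mathlib

/-!
Let `F = envelope` be the piecewise linear function on `ℕ` through the points
`(3 ^ k, (√2 + 1) ^ k)`, so that `F (3 m) = (√2 + 1) F m` and `h m = F (2 m) / 2`. Strong
induction along the ternary recursion gives `0 ≤ b n`, `b n + b (n + 1) ≤ F (2 n + 1)` and
`2 b n ≤ F (2 n + 1)`: carrying the bound on the pair is what makes the three cases close,
the slope of `F` absorbing the boundary terms. Since that slope is at most `√2 / 2`, this
yields `b m ≤ h m + √2 / 4`, which is below the claimed bound once `⌊log₃ m⌋ ≥ 1`; the case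
`m = 2` is checked directly.
-/

/-- The piecewise linear function connecting `(0,0)` and the points
`(3^n/2, (√2+1)^n/2)` for `n ≥ 1`. On `[3^n/2, 3^(n+1)/2]` it is given by the
affine formula below. -/
noncomputable def h (x : ℝ) : ℝ :=
  if x ≤ 3 / 2 then (Real.sqrt 2 + 1) / 3 * x
  else
    let n : ℕ := (⌊Real.logb 3 (2 * x)⌋).toNat
    Real.sqrt 2 / 2 * ((Real.sqrt 2 + 1) / 3) ^ n * x
      + (Real.sqrt 2 + 1) ^ n * (2 - Real.sqrt 2) / 4

namespace Northshield

open Real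

noncomputable def envelopeSlope (k : ℕ) : ℝ := √2 / 2 * ((√2 + 1) / 3) ^ k

noncomputable def envelope (m : ℕ) : ℝ :=
  envelopeSlope (Nat.log 3 m) * m + (√2 + 1) ^ Nat.log 3 m * (2 - √2) / 2

lemma envelopeSlope_nonneg (k : ℕ) : 0 ≤ envelopeSlope k := by unfold envelopeSlope; positivity

lemma envelopeSlope_succ (k : ℕ) : envelopeSlope (k + 1) = (√2 + 1) / 3 * envelopeSlope k := by
  unfold envelopeSlope; ring

lemma envelopeSlope_mul_three_pow (k : ℕ) :
    envelopeSlope k * 3 ^ k = √2 / 2 * (√2 + 1) ^ k := by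
  rw [envelopeSlope, mul_assoc, ← mul_pow, div_mul_cancel₀ _ three_ne_zero]

lemma envelopeSlope_antitone : Antitone envelopeSlope := by
  intro j k hjk
  unfold envelopeSlope
  gcongr _ * ?_
  exact pow_le_pow_of_le_one (by positivity) (by linarith [sqrt_two_lt_three_halves]) hjk

lemma envelope_eq {k m : ℕ} (hk : 3 ^ k ≤ m) (hm : m ≤ 3 ^ (k + 1)) :
    envelope m = envelopeSlope k * m + (√2 + 1) ^ k * (2 - √2) / 2 := by
  rcases hm.lt_or_eq with hm | rfl
  · rw [envelope, Nat.log_eq_of_pow_le_of_lt_pow hk hm]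
  · rw [envelope, Nat.log_pow (by norm_num)]
    push_cast
    rw [envelopeSlope_mul_three_pow, pow_succ (3 : ℝ), ← mul_assoc, envelopeSlope_mul_three_pow]
    ring

lemma envelope_add {k m d : ℕ} (hk : 3 ^ k ≤ m) (hmd : m + d ≤ 3 ^ (k + 1)) :
    envelope (m + d) = envelope m + d * envelopeSlope k := by
  rw [envelope_eq hk (by omega), envelope_eq (by omega) hmd]
  push_cast
  ring

lemma envelope_pow (k : ℕ) : envelope (3 ^ k) = (√2 + 1) ^ k := by
  rw [envelope_eq le_rfl (Nat.pow_le_pow_right (by norm_num) k.le_succ)]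
  push_cast
  rw [envelopeSlope_mul_three_pow]
  ring

lemma pow_log_le_envelope {m : ℕ} (hm : m ≠ 0) : (√2 + 1) ^ Nat.log 3 m ≤ envelope m := by
  have hk := Nat.pow_log_le_self 3 hm
  have hk' := Nat.lt_pow_succ_log_self (b := 3) (by norm_num) m
  have hadd := envelope_add (k := Nat.log 3 m) (m := 3 ^ Nat.log 3 m)
    (d := m - 3 ^ Nat.log 3 m) le_rfl (by omega)
  rw [Nat.add_sub_cancel' hk, envelope_pow] at hadd
  rw [hadd, le_add_iff_nonneg_right]
  exact mul_nonneg (Nat.cast_nonneg _) (envelopeSlope_nonneg _)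

lemma envelope_succ_le {k m : ℕ} (hk : 3 ^ k ≤ m) :
    envelope (m + 1) ≤ envelope m + envelopeSlope k := by
  have hm : m ≠ 0 := by have := Nat.one_le_pow k 3 (by norm_num); omega
  rw [envelope_add (Nat.pow_log_le_self 3 hm) (Nat.lt_pow_succ_log_self (by norm_num) m),
    Nat.cast_one, one_mul]
  gcongr
  exact envelopeSlope_antitone ((Nat.le_log_iff_pow_le (by norm_num) hm).mpr hk)

lemma envelope_three_mul {m : ℕ} (hm : m ≠ 0) : envelope (3 * m) = (√2 + 1) * envelope m := by
  set k := Nat.log 3 m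
  have hk : 3 ^ k ≤ m := Nat.pow_log_le_self 3 hm
  have hk' : m < 3 ^ (k + 1) := Nat.lt_pow_succ_log_self (by norm_num) m
  rw [envelope_eq hk hk'.le, envelope_eq (k := k + 1) (by rw [pow_succ]; omega)
    (by rw [pow_succ]; omega), envelopeSlope_succ]
  push_cast
  ring

lemma envelope_add_two_of_odd {m : ℕ} (hm : Odd m) :
    envelope (m + 2) = envelope m + 2 * envelopeSlope (Nat.log 3 m) := by
  have hk := Nat.pow_log_le_self 3 hm.pos.ne'
  have hk' := Nat.lt_pow_succ_log_self (b := 3) (by norm_num) m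
  have hodd : Odd (3 ^ (Nat.log 3 m + 1)) := Odd.pow (by decide)
  rw [envelope_add hk (by rcases hm with ⟨a, rfl⟩; rcases hodd with ⟨c, hc⟩; omega)]
  push_cast
  ring

lemma le_envelope_three_mul_sub_two {m : ℕ} (hm : 3 ≤ m) :
    (1 + √2 / 2) * envelope m ≤ envelope (3 * m - 2) := by
  set k := Nat.log 3 m
  have hk : 3 ^ k ≤ m := Nat.pow_log_le_self 3 (by omega)
  have hk1 : 1 ≤ k := (Nat.le_log_iff_pow_le (by norm_num) (by omega)).mpr (by simpa using hm)
  have hstep₁ := envelope_succ_le (m := 3 * m - 2) (k := k) (by omega)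
  have hstep₂ := envelope_succ_le (m := 3 * m - 2 + 1) (k := k) (by omega)
  rw [show 3 * m - 2 + 1 + 1 = 3 * m by omega, envelope_three_mul (by omega)] at hstep₂
  have h3k : (3 : ℝ) ≤ 3 ^ k := le_self_pow₀ (by norm_num) (by omega)
  have hslope : 2 * envelopeSlope k ≤ √2 / 2 * envelope m :=
    calc 2 * envelopeSlope k ≤ 3 ^ k * envelopeSlope k := by
          gcongr
          · exact envelopeSlope_nonneg k
          · linarith
      _ = √2 / 2 * (√2 + 1) ^ k := by rw [mul_comm, envelopeSlope_mul_three_pow]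
      _ ≤ √2 / 2 * envelope m := by gcongr; exact pow_log_le_envelope (by omega)
  linarith

lemma floor_logb_three_natCast (n : ℕ) : ⌊logb 3 (n : ℝ)⌋ = Nat.log 3 n := by
  rw [show (3 : ℝ) = (3 : ℕ) by norm_num, floor_logb_natCast n.cast_nonneg, Int.log_natCast]

lemma h_natCast {m : ℕ} (hm : 2 ≤ m) : h m = envelope (2 * m) / 2 := by
  have hfloor : (⌊logb 3 (2 * (m : ℝ))⌋).toNat = Nat.log 3 (2 * m) := by
    rw [show 2 * (m : ℝ) = (2 * m : ℕ) by push_cast; rfl, floor_logb_three_natCast,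
      Int.toNat_natCast]
  have hm' : ¬ (m : ℝ) ≤ 3 / 2 := by
    rw [not_le]
    linarith [(Nat.ofNat_le_cast.mpr hm : (2 : ℝ) ≤ m)]
  rw [h, if_neg hm', hfloor, envelope, envelopeSlope]
  push_cast
  ring

def EnvelopeBound (b : ℕ → ℝ) (n : ℕ) : Prop :=
  0 ≤ b n ∧ b n + b (n + 1) ≤ envelope (2 * n + 1) ∧ 2 * b n ≤ envelope (2 * n + 1)

variable {b : ℕ → ℝ}

lemma apply_two_eq_sqrt_two (hb0 : b 0 = 0) (hb1 : b 1 = 1)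
    (hrec2 : ∀ n : ℕ, b (3 * n + 2) = b n + √2 * b (n + 1)) : b 2 = √2 := by
  simpa [hb0, hb1] using hrec2 0

lemma envelopeBound_zero (hb0 : b 0 = 0) (hb1 : b 1 = 1) : EnvelopeBound b 0 := by
  have hF : envelope 1 = 1 := by simpa using envelope_pow 0
  simp [EnvelopeBound, hb0, hb1, hF]

lemma envelopeBound_one (hb0 : b 0 = 0) (hb1 : b 1 = 1)
    (hrec2 : ∀ n : ℕ, b (3 * n + 2) = b n + √2 * b (n + 1)) : EnvelopeBound b 1 := by
  have hF : envelope 3 = √2 + 1 := by simpa using envelope_pow 1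
  have hb2 := apply_two_eq_sqrt_two hb0 hb1 hrec2
  refine ⟨by simp [hb1], ?_, ?_⟩ <;> simp [hb1, hb2, hF] <;> linarith [one_lt_sqrt_two]

lemma envelope_two_mul_add_one_nonneg (q : ℕ) : 0 ≤ envelope (2 * q + 1) :=
  (pow_log_le_envelope (by omega)).trans' (by positivity)

lemma EnvelopeBound.three_mul (hrec0 : ∀ n : ℕ, b (3 * n) = b n)
    (hrec1 : ∀ n : ℕ, b (3 * n + 1) = √2 * b n + b (n + 1)) {q : ℕ} (hq : 1 ≤ q)
    (hb : EnvelopeBound b q) : EnvelopeBound b (3 * q) := by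
  obtain ⟨hnonneg, hpair, hhalf⟩ := hb
  have hF := le_envelope_three_mul_sub_two (m := 2 * q + 1) (by omega)
  rw [show 3 * (2 * q + 1) - 2 = 2 * (3 * q) + 1 by omega] at hF
  have hF0 : 0 ≤ √2 / 2 * envelope (2 * q + 1) :=
    mul_nonneg (by positivity) (envelope_two_mul_add_one_nonneg q)
  refine ⟨by rwa [hrec0], ?_, ?_⟩
  · rw [hrec0, hrec1]
    linarith [mul_le_mul_of_nonneg_left hhalf (sqrt_nonneg 2)]
  · rw [hrec0]
    linarith

lemma EnvelopeBound.three_mul_add_one (hrec1 : ∀ n : ℕ, b (3 * n + 1) = √2 * b n + b (n + 1))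
    (hrec2 : ∀ n : ℕ, b (3 * n + 2) = b n + √2 * b (n + 1)) {q : ℕ}
    (hb : EnvelopeBound b q) (hb' : 0 ≤ b (q + 1)) : EnvelopeBound b (3 * q + 1) := by
  obtain ⟨hnonneg, hpair, hhalf⟩ := hb
  have hF := envelope_three_mul (m := 2 * q + 1) (by omega)
  rw [show 3 * (2 * q + 1) = 2 * (3 * q + 1) + 1 by omega] at hF
  refine ⟨?_, ?_, ?_⟩
  · rw [hrec1]; positivity
  · rw [hrec1, hrec2, hF]
    linarith [mul_le_mul_of_nonneg_left hpair (by positivity : (0 : ℝ) ≤ √2 + 1)]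
  · rw [hrec1, hF]
    linarith [mul_nonneg (by linarith [one_lt_sqrt_two] : (0 : ℝ) ≤ √2 - 1)
      (by linarith : 0 ≤ envelope (2 * q + 1) - 2 * b q)]

lemma EnvelopeBound.three_mul_add_two (hrec0 : ∀ n : ℕ, b (3 * n) = b n)
    (hrec2 : ∀ n : ℕ, b (3 * n + 2) = b n + √2 * b (n + 1)) {q : ℕ}
    (hb : EnvelopeBound b q) (hb' : EnvelopeBound b (q + 1)) : EnvelopeBound b (3 * q + 2) := by
  obtain ⟨hnonneg, hpair, hhalf⟩ := hb
  obtain ⟨hnonneg', -, hhalf'⟩ := hb'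
  have hodd : Odd (2 * q + 1) := odd_two_mul_add_one q
  have hF' := envelope_add_two_of_odd hodd
  have hF₃ := envelope_add_two_of_odd ((by decide : Odd 3).mul hodd)
  rw [envelope_three_mul (by omega), mul_comm 3, Nat.log_mul_base (by norm_num) (by omega),
    envelopeSlope_succ, show (2 * q + 1) * 3 + 2 = 2 * (3 * q + 2) + 1 by ring] at hF₃
  rw [show 2 * q + 1 + 2 = 2 * (q + 1) + 1 by ring] at hF'
  have hs := envelopeSlope_nonneg (Nat.log 3 (2 * q + 1))
  have hsqrt := sqrt_two_lt_three_halves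
  refine ⟨?_, ?_, ?_⟩
  · rw [hrec2]; positivity
  · rw [hrec2, show 3 * q + 2 + 1 = 3 * (q + 1) by ring, hrec0, hF₃]
    linarith [mul_le_mul_of_nonneg_left (by linarith : b (q + 1) ≤ envelope (2 * q + 1))
      (sqrt_nonneg 2), mul_nonneg (sqrt_nonneg 2) hs]
  · rw [hrec2, hF₃]
    linarith [mul_nonneg (by linarith [one_lt_sqrt_two] : (0 : ℝ) ≤ √2 - 1)
      (by linarith : 0 ≤ envelope (2 * q + 1) + 2 * envelopeSlope (Nat.log 3 (2 * q + 1))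
        - 2 * b (q + 1)),
      mul_nonneg (by linarith : (0 : ℝ) ≤ 2 - √2) hs]

theorem envelopeBound (hb0 : b 0 = 0) (hb1 : b 1 = 1)
    (hrec0 : ∀ n : ℕ, b (3 * n) = b n)
    (hrec1 : ∀ n : ℕ, b (3 * n + 1) = √2 * b n + b (n + 1))
    (hrec2 : ∀ n : ℕ, b (3 * n + 2) = b n + √2 * b (n + 1)) (n : ℕ) :
    EnvelopeBound b n := by
  induction n using Nat.strong_induction_on with
  | _ n ih =>
  obtain ⟨q, r, hr, rfl⟩ : ∃ q r, r < 3 ∧ n = 3 * q + r :=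
    ⟨n / 3, n % 3, Nat.mod_lt _ (by norm_num), (Nat.div_add_mod n 3).symm⟩
  interval_cases r
  · rcases Nat.eq_zero_or_pos q with rfl | hq
    · exact envelopeBound_zero hb0 hb1
    · exact (ih q (by omega)).three_mul hrec0 hrec1 hq
  · rcases Nat.eq_zero_or_pos q with rfl | hq
    · exact envelopeBound_one hb0 hb1 hrec2
    · exact (ih q (by omega)).three_mul_add_one hrec1 hrec2 (ih (q + 1) (by omega)).1
  · exact (ih q (by omega)).three_mul_add_two hrec0 hrec2 (ih (q + 1) (by omega))

lemma le_h_add_of_envelopeBound {m : ℕ} (hm : 2 ≤ m) (hb : EnvelopeBound b m) :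
    b m ≤ h m + √2 / 4 := by
  have hstep := envelope_succ_le (k := 0) (m := 2 * m) (by omega)
  rw [envelopeSlope, pow_zero, mul_one] at hstep
  rw [h_natCast hm]
  linarith [hb.2.2]

lemma sqrt_two_le_h_two : √2 ≤ h (2 : ℕ) := by
  rw [h_natCast le_rfl, envelope_add (k := 1) (m := 3) (d := 1) (by norm_num) (by norm_num),
    show 3 = 3 ^ 1 by rfl, envelope_pow, envelopeSlope]
  norm_num
  linarith [mul_self_sqrt (zero_le_two : (0 : ℝ) ≤ 2), sqrt_two_lt_three_halves]

end Northshield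

theorem northshield_upper_bound (b : ℕ → ℝ)
    (hb0 : b 0 = 0) (hb1 : b 1 = 1)
    (hrec0 : ∀ n : ℕ, b (3 * n) = b n)
    (hrec1 : ∀ n : ℕ, b (3 * n + 1) = Real.sqrt 2 * b n + b (n + 1))
    (hrec2 : ∀ n : ℕ, b (3 * n + 2) = b n + Real.sqrt 2 * b (n + 1)) :
    ∀ m : ℕ, 2 ≤ m →
      b m ≤ h m + (Real.sqrt 2 + 1) * (⌊Real.logb 3 (m : ℝ)⌋ : ℝ) := by
  intro m hm
  rw [Northshield.floor_logb_three_natCast]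
  rcases hm.eq_or_lt with rfl | hm
  · rw [Northshield.apply_two_eq_sqrt_two hb0 hb1 hrec2, Nat.log_of_lt (by norm_num)]
    simpa using Northshield.sqrt_two_le_h_two
  · have hlog : 1 ≤ Nat.log 3 m := (Nat.le_log_iff_pow_le (by norm_num) (by omega)).mpr hm
    have hbound := Northshield.le_h_add_of_envelopeBound hm.le
      (Northshield.envelopeBound hb0 hb1 hrec0 hrec1 hrec2 m)
    have hlog' : (1 : ℝ) ≤ (Nat.log 3 m : ℤ) := by exact_mod_cast hlog
    linarith [Real.sqrt_nonneg 2,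
      mul_le_mul_of_nonneg_left hlog' (by positivity : (0 : ℝ) ≤ √2 + 1)]
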